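/- Let K, L, L₁, …, L_{n-2} be star bodies in ℝⁿ, let i be an integer with 0 ≤ i ≤ n-1, and let α be real with 0 ≤ α ≤ 1. Writing I(Q, M) for the mixed intersection body I(Q, L₁,…,L_{n-2}), one has W̃_i(I(K +̃ L, M))^{1/(n-i)} ≤ W̃_i(I(α·K +̃ (1-α)·L, M))^{1/(n-i)} + W̃_i(I((1-α)·K +̃ α·L, M))^{1/(n-i)}. -/

import Mathlib

open MeasureTheory Metric Finset

noncomputable section

/-- The unit sphere `S^{n-1}` in `ℝⁿ`. -/
def unitSphere (n : ℕ) : Set (EuclideanSpace ℝ (Fin n)) :=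
  Metric.sphere 0 1

/-- A star body, described by its radial function: a continuous, strictly
positive function on the unit sphere. -/
def IsStarBody (n : ℕ) (ρ : EuclideanSpace ℝ (Fin n) → ℝ) : Prop :=
  ContinuousOn ρ (unitSphere n) ∧ ∀ u ∈ unitSphere n, 0 < ρ u

/-- `ρL` is a dilate of `ρK`: the radial functions are positive multiples of
each other on the unit sphere. -/
def Dilates (n : ℕ) (ρK ρL : EuclideanSpace ℝ (Fin n) → ℝ) : Prop :=
  ∃ lam : ℝ, 0 < lam ∧ ∀ u ∈ unitSphere n, ρL u = lam * ρK u

/-- The dual quermassintegral `W̃_i(K) = (1/n) ∫_{S^{n-1}} ρ_K(u)^{n-i} dS(u)`,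
the integral taken with respect to `(n-1)`-dimensional Hausdorff measure. -/
def dualQuer (n i : ℕ) (ρ : EuclideanSpace ℝ (Fin n) → ℝ) : ℝ :=
  (1 / n) * ∫ u in unitSphere n, (ρ u) ^ (n - i) ∂ μH[(n : ℝ) - 1]

/-- The radial function of the mixed intersection body `I(K₁, …, K_{n-1})`:
`ρ(I(K₁,…,K_{n-1}), u) = (1/(n-1)) ∫_{S^{n-1} ∩ u^⊥} ρ_{K₁}(w)⋯ρ_{K_{n-1}}(w) dw`,
the integral taken with respect to `(n-2)`-dimensional Hausdorff measure. -/
def mixedIntRadial (n : ℕ) (ρs : Fin (n - 1) → EuclideanSpace ℝ (Fin n) → ℝ) :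
    EuclideanSpace ℝ (Fin n) → ℝ :=
  fun u => (1 / ((n : ℝ) - 1)) *
    ∫ w in unitSphere n ∩ {w | inner ℝ u w = (0 : ℝ)}, (∏ k, ρs k w) ∂ μH[(n : ℝ) - 2]

/-!
Radial addition in the last argument makes the radial function of a mixed intersection body
additive, and `(K +̃ L) = (αK +̃ (1-α)L) +̃ ((1-α)K +̃ αL)`, so
`ρ(I(K +̃ L, M)) = ρ(I(αK +̃ (1-α)L, M)) + ρ(I((1-α)K +̃ αL, M))` on the sphere. Up to the factor
`n^{-1/(n-i)}`, `W̃_i(Q)^{1/(n-i)}` is the `L^{n-i}` norm of `ρ_Q` on the sphere, so the inequality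
is Minkowski's inequality, once these radial functions are known to be continuous. For that, the
great subspheres `S_u` have finite `(n-2)`-dimensional Hausdorff measure (the unit sphere is covered
by finitely many Lipschitz images of cubes), and the reflection in `(u + u₀)^⊥` carries `S_{u₀}`
onto `S_u` and depends continuously on `u` near `u₀`, so dominated convergence applies.
-/

open Set
open Module (finrank)
open scoped RealInnerProductSpace NNReal ENNReal

theorem lipschitzOnWith_inv_norm_smul {E : Type*} [NormedAddCommGroup E] [NormedSpace ℝ E] :
    LipschitzOnWith 2 (fun x : E => ‖x‖⁻¹ • x) {x | 1 ≤ ‖x‖} := by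
  refine LipschitzOnWith.of_dist_le_mul fun x (hx : 1 ≤ ‖x‖) y (hy : 1 ≤ ‖y‖) => ?_
  have hx0 : 0 < ‖x‖ := one_pos.trans_le hx
  have hy0 : 0 < ‖y‖ := one_pos.trans_le hy
  have hsplit : ‖x‖⁻¹ • x - ‖y‖⁻¹ • y = ‖x‖⁻¹ • (x - y) + (‖x‖⁻¹ - ‖y‖⁻¹) • y := by
    rw [smul_sub, sub_smul]; abel
  have h₁ : ‖‖x‖⁻¹ • (x - y)‖ ≤ ‖x - y‖ := by
    rw [norm_smul, norm_inv, norm_norm]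
    exact mul_le_of_le_one_left (norm_nonneg _) (inv_le_one_of_one_le₀ hx)
  have h₂ : ‖(‖x‖⁻¹ - ‖y‖⁻¹) • y‖ ≤ ‖x - y‖ := by
    have : ‖x‖⁻¹ - ‖y‖⁻¹ = (‖y‖ - ‖x‖) / (‖x‖ * ‖y‖) := by field_simp
    rw [norm_smul, this, norm_div, norm_mul, norm_norm, norm_norm, Real.norm_eq_abs,
      div_mul_eq_mul_div, mul_div_mul_right _ _ hy0.ne', abs_sub_comm]
    exact div_le_of_le_mul₀ hx0.le (norm_nonneg _)
      (by nlinarith [abs_norm_sub_norm_le x y, norm_nonneg (x - y)])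
  simp only [NNReal.coe_ofNat, dist_eq_norm, hsplit]
  linarith [norm_add_le (‖x‖⁻¹ • (x - y)) ((‖x‖⁻¹ - ‖y‖⁻¹) • y)]

theorem sphere_subset_iUnion_image_inv_norm_smul_insertNth (m : ℕ) :
    sphere (0 : EuclideanSpace ℝ (Fin (m + 1))) 1 ⊆
      ⋃ p ∈ (univ : Set (Fin (m + 1))) ×ˢ ({-1, 1} : Set ℝ),
        (fun y : Fin m → ℝ => ‖WithLp.toLp 2 (Fin.insertNth (α := fun _ => ℝ) p.1 p.2 y)‖⁻¹ •
          WithLp.toLp 2 (Fin.insertNth (α := fun _ => ℝ) p.1 p.2 y)) ''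
        Icc (-1) 1 := by
  intro u hu
  have hu1 : ‖u‖ = 1 := mem_sphere_zero_iff_norm.mp hu
  obtain ⟨j, hj⟩ := Finite.exists_max fun k => |u k|
  set t := |u j|
  have ht : 0 < t := by
    refine (abs_nonneg _).lt_of_ne' fun h0 => ?_
    have : u = 0 := by ext k; simpa [h0, t] using hj k
    simp [this] at hu1
  set x := t⁻¹ • u
  have hx : ∀ k, |x k| ≤ 1 := fun k => by
    simpa [x, abs_mul, abs_inv, abs_of_pos ht, inv_mul_le_one₀ ht] using hj k
  have hxj : x j ∈ ({-1, 1} : Set ℝ) := by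
    have : |x j| = 1 := by simp [x, abs_mul, abs_of_pos ht, ht.ne', t]
    rcases (abs_eq zero_le_one).mp this with h | h <;> simp [h]
  refine Set.mem_biUnion (x := (j, x j)) ⟨mem_univ _, hxj⟩
    ⟨j.removeNth x, ⟨fun k => (abs_le.mp (hx _)).1, fun k => (abs_le.mp (hx _)).2⟩, ?_⟩
  have hnx : ‖x‖ = t⁻¹ := by simp [x, norm_smul, hu1, abs_of_pos ht]
  simp only [Fin.insertNth_self_removeNth, WithLp.toLp_ofLp, hnx, x, inv_inv, smul_smul,
    mul_inv_cancel₀ ht.ne', one_smul]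

theorem hausdorffMeasure_sphere_euclideanSpace_lt_top (m : ℕ) :
    μH[m] (sphere (0 : EuclideanSpace ℝ (Fin (m + 1))) 1) < ⊤ := by
  refine (measure_mono (sphere_subset_iUnion_image_inv_norm_smul_insertNth m)).trans_lt
    (measure_biUnion_lt_top (finite_univ.prod (toFinite _)) fun p hp => ?_)
  set g : (Fin m → ℝ) → EuclideanSpace ℝ (Fin (m + 1)) :=
    fun y => WithLp.toLp 2 (Fin.insertNth (α := fun _ => ℝ) p.1 p.2 y)
  have hg : LipschitzWith _ g := (PiLp.lipschitzWith_toLp 2 _).comp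
    (LipschitzWith.of_dist_le_mul (K := 1) fun y y' => by
      rw [Fin.dist_insertNth_insertNth, dist_self, NNReal.coe_one, one_mul]
      exact max_le dist_nonneg le_rfl)
  have hg1 : MapsTo g (Icc (-1) 1) {x | 1 ≤ ‖x‖} := fun y _ => by
    have hσ : |p.2| = 1 := by rcases hp.2 with h | (h : p.2 = 1) <;> simp [h]
    have := PiLp.norm_apply_le (g y) p.1
    simp only [g, Fin.insertNth_apply_same, Real.norm_eq_abs, hσ] at this
    exact this
  have hQ : μH[m] (Icc (-1 : Fin m → ℝ) 1) < ⊤ := by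
    simpa [← hausdorffMeasure_pi_real] using
      (isCompact_Icc (a := (-1 : Fin m → ℝ)) (b := 1)).measure_lt_top (μ := volume)
  have hface := lipschitzOnWith_inv_norm_smul.comp (hg.lipschitzOnWith (s := Icc (-1) 1)) hg1
  exact (hface.hausdorffMeasure_image_le m.cast_nonneg).trans_lt <| ENNReal.mul_lt_top
    (ENNReal.rpow_lt_top_of_nonneg m.cast_nonneg ENNReal.coe_ne_top) hQ

section GreatSubsphere

open Submodule

variable {E : Type*} [NormedAddCommGroup E] [InnerProductSpace ℝ E]

theorem hausdorffMeasure_sphere_lt_top [FiniteDimensional ℝ E] [MeasurableSpace E]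
    [BorelSpace E] : μH[finrank ℝ E - 1] (sphere (0 : E) 1) < ⊤ := by
  have hrepr := (stdOrthonormalBasis ℝ E).repr.symm.toIsometryEquiv.hausdorffMeasure_image
    (finrank ℝ E - 1) (sphere 0 1)
  rw [IsometryEquiv.image_sphere] at hrepr
  simp only [LinearIsometryEquiv.coe_toIsometryEquiv, map_zero] at hrepr
  rw [hrepr]
  generalize finrank ℝ E = k
  cases k with
  | zero => simp [sphere_eq_empty_of_subsingleton]
  | succ m => simpa using hausdorffMeasure_sphere_euclideanSpace_lt_top m

def sphereSlice (u : E) : Set E := sphere 0 1 ∩ {w | ⟪u, w⟫ = 0}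

theorem sphereSlice_subset_sphere (u : E) : sphereSlice u ⊆ sphere 0 1 := inter_subset_left

theorem isClosed_sphereSlice (u : E) : IsClosed (sphereSlice u) :=
  isClosed_sphere.inter (isClosed_eq (continuous_const.inner continuous_id) continuous_const)

theorem sphereSlice_neg (u : E) : sphereSlice (-u) = sphereSlice u := by
  simp [sphereSlice, inner_neg_left]

theorem LinearIsometryEquiv.image_sphereSlice (A : E ≃ₗᵢ[ℝ] E) (u : E) :
    A '' sphereSlice u = sphereSlice (A u) := by
  ext w
  simp [A.image_eq_preimage_symm, sphereSlice, A.inner_map_eq_flip]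

theorem sphereSlice_eq_image_val_sphere (u : E) :
    sphereSlice u = ((↑) : (ℝ ∙ u)ᗮ → E) '' sphere 0 1 := by
  ext w
  simp [sphereSlice, mem_orthogonal_singleton_iff_inner_right, and_comm]

theorem hausdorffMeasure_sphereSlice_lt_top [FiniteDimensional ℝ E] [MeasurableSpace E]
    [BorelSpace E] (hE : 2 ≤ finrank ℝ E) {u : E} (hu : u ≠ 0) :
    μH[finrank ℝ E - 2] (sphereSlice u) < ⊤ := by
  have hK : finrank ℝ (ℝ ∙ u)ᗮ = finrank ℝ E - 1 := by
    have := (ℝ ∙ u).finrank_add_finrank_orthogonal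
    rw [finrank_span_singleton hu] at this
    omega
  have hd : (finrank ℝ E : ℝ) - 2 = (finrank ℝ (ℝ ∙ u)ᗮ : ℝ) - 1 := by
    rw [hK, Nat.cast_sub (by omega)]; ring
  have hd0 : 0 ≤ (finrank ℝ (ℝ ∙ u)ᗮ : ℝ) - 1 :=
    sub_nonneg.2 (by exact_mod_cast (by omega : 1 ≤ finrank ℝ (ℝ ∙ u)ᗮ))
  rw [sphereSlice_eq_image_val_sphere, hd, isometry_subtype_coe.hausdorffMeasure_image (.inl hd0)]
  exact hausdorffMeasure_sphere_lt_top

theorem reflection_orthogonalComplement_singleton_apply (z w : E) :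
    (ℝ ∙ z)ᗮ.reflection w = w - (2 * ⟪z, w⟫ / ‖z‖ ^ 2) • z := by
  rw [reflection_orthogonal_apply, Submodule.reflection_apply, starProjection_singleton]
  simp only [RCLike.ofReal_real_eq_id, id]
  module

theorem continuousAt_reflection_orthogonalComplement_singleton (w : E) {z : E} (hz : z ≠ 0) :
    ContinuousAt (fun z : E => (ℝ ∙ z)ᗮ.reflection w) z := by
  simp_rw [reflection_orthogonalComplement_singleton_apply]
  have : ‖z‖ ^ 2 ≠ 0 := by positivity
  fun_prop (disch := assumption)

theorem sphereSlice_eq_image_reflection {u v : E} (h : ‖u‖ = ‖v‖) :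
    sphereSlice u = (ℝ ∙ (u + v))ᗮ.reflection '' sphereSlice v := by
  have hv : (ℝ ∙ (u + v))ᗮ.reflection v = -u := by
    simpa [add_comm] using reflection_sub (v := v) (w := -u) (by rw [norm_neg, h])
  rw [LinearIsometryEquiv.image_sphereSlice, hv, sphereSlice_neg]

end GreatSubsphere

section SliceIntegral

open Submodule Filter

variable {E F : Type*} [NormedAddCommGroup E] [InnerProductSpace ℝ E] [FiniteDimensional ℝ E]
  [MeasurableSpace E] [BorelSpace E] [NormedAddCommGroup F] [NormedSpace ℝ F]

theorem continuousOn_setIntegral_sphereSlice (hE : 2 ≤ finrank ℝ E) {G : E → F}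
    (hG : ContinuousOn G (sphere 0 1)) :
    ContinuousOn (fun u => ∫ w in sphereSlice u, G w ∂μH[finrank ℝ E - 2]) (sphere 0 1) := by
  intro u₀ hu₀
  set μ : Measure E := μH[finrank ℝ E - 2]
  let R (u : E) : E ≃ₗᵢ[ℝ] E := (ℝ ∙ (u + u₀))ᗮ.reflection
  have hR : ∀ u, MapsTo (R u) (sphere 0 1) (sphere 0 1) := fun u w hw => by
    simpa using hw
  have hchange : ∀ u ∈ sphere (0 : E) 1,
      ∫ w in sphereSlice u, G w ∂μ = ∫ w in sphereSlice u₀, G (R u w) ∂μ := fun u hu => by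
    rw [sphereSlice_eq_image_reflection (v := u₀)
      (by rw [mem_sphere_zero_iff_norm.1 hu, mem_sphere_zero_iff_norm.1 hu₀])]
    exact ((R u).toIsometryEquiv.measurePreserving_hausdorffMeasure _).setIntegral_image_emb
      (R u).toHomeomorph.measurableEmbedding G _
  have hu₀0 : u₀ ≠ 0 := ne_zero_of_mem_unit_sphere ⟨u₀, hu₀⟩
  have hslice := (isClosed_sphereSlice u₀).measurableSet
  have : IsFiniteMeasure (μ.restrict (sphereSlice u₀)) :=
    isFiniteMeasure_restrict.2 (hausdorffMeasure_sphereSlice_lt_top hE hu₀0).ne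
  obtain ⟨C, hC⟩ := (isCompact_sphere (0 : E) 1).exists_bound_of_continuousOn hG
  refine ContinuousWithinAt.congr ?_ hchange (hchange u₀ hu₀)
  refine continuousWithinAt_of_dominated (bound := fun _ => C) ?_ ?_ ?_ ?_
  · exact Eventually.of_forall fun u =>
      ((hG.comp (R u).continuous.continuousOn (hR u)).mono
        (sphereSlice_subset_sphere u₀)).aestronglyMeasurable hslice
  · exact Eventually.of_forall fun u => (ae_restrict_iff' hslice).2 <| ae_of_all _ fun w hw =>
      hC _ (hR u (sphereSlice_subset_sphere u₀ hw))
  · exact integrable_const C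
  · refine (ae_restrict_iff' hslice).2 <| ae_of_all _ fun w hw => ?_
    have hw' := sphereSlice_subset_sphere u₀ hw
    have hRw : ContinuousAt (fun u => R u w) u₀ :=
      (continuousAt_reflection_orthogonalComplement_singleton w (z := u₀ + u₀)
        (by rw [← two_smul ℝ]; exact smul_ne_zero two_ne_zero hu₀0)).comp
        (f := fun u => u + u₀) (by fun_prop)
    exact ContinuousWithinAt.comp (f := fun u => R u w) (hG _ (hR u₀ hw'))
      hRw.continuousWithinAt fun u _ => hR u hw'

end SliceIntegral

section Minkowski

variable {α E : Type*} [MeasurableSpace α] {μ : Measure α} [NormedAddCommGroup E]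

theorem integral_norm_add_rpow_rpow_inv_le {p : ℝ} (hp : 1 ≤ p) {f g : α → E}
    (hf : MemLp f (.ofReal p) μ) (hg : MemLp g (.ofReal p) μ) :
    (∫ a, ‖f a + g a‖ ^ p ∂μ) ^ p⁻¹ ≤
      (∫ a, ‖f a‖ ^ p ∂μ) ^ p⁻¹ + (∫ a, ‖g a‖ ^ p ∂μ) ^ p⁻¹ := by
  have hp0 : ENNReal.ofReal p ≠ 0 := by simp; linarith
  have hnorm : ∀ {h : α → E}, MemLp h (.ofReal p) μ →
      eLpNorm h (.ofReal p) μ = .ofReal ((∫ a, ‖h a‖ ^ p ∂μ) ^ p⁻¹) := fun hh => by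
    rw [hh.eLpNorm_eq_integral_rpow_norm hp0 ENNReal.ofReal_ne_top,
      ENNReal.toReal_ofReal (by linarith)]
  have hle := eLpNorm_add_le hf.1 hg.1 (ENNReal.one_le_ofReal.2 hp)
  rw [hnorm (hf.add hg), hnorm hf, hnorm hg, ← ENNReal.ofReal_add (by positivity) (by positivity),
    ENNReal.ofReal_le_ofReal_iff (by positivity)] at hle
  exact hle

variable [TopologicalSpace α] [OpensMeasurableSpace α] [SecondCountableTopologyEither α E]

theorem IsCompact.memLp_restrict_of_continuousOn {s : Set α} (hs : IsCompact s)
    (hsm : MeasurableSet s) (hμ : μ s ≠ ⊤) {f : α → E} (hf : ContinuousOn f s) (p : ℝ≥0∞) :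
    MemLp f p (μ.restrict s) := by
  have : IsFiniteMeasure (μ.restrict s) := isFiniteMeasure_restrict.2 hμ
  obtain ⟨C, hC⟩ := hs.exists_bound_of_continuousOn hf
  exact .of_bound (hf.aestronglyMeasurable hsm) C ((ae_restrict_iff' hsm).2 (ae_of_all _ hC))

end Minkowski

section DualQuermassintegral

theorem measurableSet_unitSphere (n : ℕ) : MeasurableSet (unitSphere n) :=
  isClosed_sphere.measurableSet

theorem dualQuer_eq_integral_norm_rpow {n i : ℕ} {ρ : EuclideanSpace ℝ (Fin n) → ℝ}
    (hρ : ∀ u ∈ unitSphere n, 0 ≤ ρ u) :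
    dualQuer n i ρ = 1 / n * ∫ u in unitSphere n, ‖ρ u‖ ^ ((n - i : ℕ) : ℝ) ∂μH[(n : ℝ) - 1] := by
  rw [dualQuer]
  congr 1
  refine setIntegral_congr_fun (measurableSet_unitSphere n) fun u hu => ?_
  rw [Real.norm_of_nonneg (hρ u hu), Real.rpow_natCast]

theorem dualQuer_rpow_le_add {n i : ℕ} (hi : i < n) {ρ σ τ : EuclideanSpace ℝ (Fin n) → ℝ}
    (hσ : ContinuousOn σ (unitSphere n)) (hτ : ContinuousOn τ (unitSphere n))
    (hσ0 : ∀ u ∈ unitSphere n, 0 ≤ σ u) (hτ0 : ∀ u ∈ unitSphere n, 0 ≤ τ u)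
    (hρ : ∀ u ∈ unitSphere n, ρ u = σ u + τ u) :
    dualQuer n i ρ ^ (1 / ((n : ℝ) - i)) ≤
      dualQuer n i σ ^ (1 / ((n : ℝ) - i)) + dualQuer n i τ ^ (1 / ((n : ℝ) - i)) := by
  have hρ0 : ∀ u ∈ unitSphere n, 0 ≤ ρ u := fun u hu => by
    rw [hρ u hu]; exact add_nonneg (hσ0 u hu) (hτ0 u hu)
  have hp : (n : ℝ) - i = ((n - i : ℕ) : ℝ) := by rw [Nat.cast_sub hi.le]
  have hS : μH[(n : ℝ) - 1] (unitSphere n) ≠ ⊤ := by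
    have := hausdorffMeasure_sphere_lt_top (E := EuclideanSpace ℝ (Fin n))
    rw [finrank_euclideanSpace_fin] at this
    exact this.ne
  have hLp : ∀ {f : EuclideanSpace ℝ (Fin n) → ℝ}, ContinuousOn f (unitSphere n) →
      MemLp f (.ofReal ((n - i : ℕ) : ℝ)) (μH[(n : ℝ) - 1].restrict (unitSphere n)) := fun hf =>
    (isCompact_sphere 0 1).memLp_restrict_of_continuousOn (measurableSet_unitSphere n) hS hf _
  have hmink := integral_norm_add_rpow_rpow_inv_le (by exact_mod_cast (by omega : 1 ≤ n - i))
    (hLp hσ) (hLp hτ)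
  have hρστ : ∫ u in unitSphere n, ‖ρ u‖ ^ ((n - i : ℕ) : ℝ) ∂μH[(n : ℝ) - 1] =
      ∫ u in unitSphere n, ‖σ u + τ u‖ ^ ((n - i : ℕ) : ℝ) ∂μH[(n : ℝ) - 1] :=
    setIntegral_congr_fun (measurableSet_unitSphere n) fun u hu => by simp only [hρ u hu]
  rw [← hρστ] at hmink
  rw [dualQuer_eq_integral_norm_rpow hρ0, dualQuer_eq_integral_norm_rpow hσ0,
    dualQuer_eq_integral_norm_rpow hτ0, hp, one_div ((n - i : ℕ) : ℝ),
    Real.mul_rpow (by positivity) (by positivity), Real.mul_rpow (by positivity) (by positivity),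
    Real.mul_rpow (by positivity) (by positivity), ← mul_add]
  gcongr

end DualQuermassintegral

section MixedIntersectionBody

variable {n : ℕ} {ρs : Fin (n - 1) → EuclideanSpace ℝ (Fin n) → ℝ}

theorem mixedIntRadial_apply (u : EuclideanSpace ℝ (Fin n)) :
    mixedIntRadial n ρs u =
      1 / ((n : ℝ) - 1) * ∫ w in sphereSlice u, ∏ k, ρs k w ∂μH[(n : ℝ) - 2] :=
  rfl

theorem continuousOn_mixedIntRadial (hn : 2 ≤ n)
    (hρs : ∀ k, ContinuousOn (ρs k) (unitSphere n)) :
    ContinuousOn (mixedIntRadial n ρs) (unitSphere n) := by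
  have := continuousOn_setIntegral_sphereSlice (E := EuclideanSpace ℝ (Fin n))
    (by simpa using hn) (continuousOn_finsetProd Finset.univ fun k _ => hρs k)
  rw [finrank_euclideanSpace_fin] at this
  exact continuousOn_const.mul this

theorem mixedIntRadial_nonneg (hn : 1 ≤ n) (hρs : ∀ k, ∀ w ∈ unitSphere n, 0 ≤ ρs k w)
    (u : EuclideanSpace ℝ (Fin n)) : 0 ≤ mixedIntRadial n ρs u :=
  mul_nonneg (one_div_nonneg.2 (sub_nonneg.2 (by exact_mod_cast hn)))
    (setIntegral_nonneg (isClosed_sphereSlice u).measurableSet fun w hw =>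
      Finset.prod_nonneg fun k _ => hρs k w (sphereSlice_subset_sphere u hw))

theorem mixedIntRadial_add (hn : 2 ≤ n) {σs τs : Fin (n - 1) → EuclideanSpace ℝ (Fin n) → ℝ}
    (j : Fin (n - 1)) (hσs : ∀ k, ContinuousOn (σs k) (unitSphere n))
    (hτs : ∀ k, ContinuousOn (τs k) (unitSphere n))
    (hj : ∀ w ∈ unitSphere n, ρs j w = σs j w + τs j w)
    (hσj : ∀ k ≠ j, σs k = ρs k) (hτj : ∀ k ≠ j, τs k = ρs k)
    {u : EuclideanSpace ℝ (Fin n)} (hu : u ≠ 0) :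
    mixedIntRadial n ρs u = mixedIntRadial n σs u + mixedIntRadial n τs u := by
  have hslice : μH[(n : ℝ) - 2] (sphereSlice u) ≠ ⊤ := by
    have := hausdorffMeasure_sphereSlice_lt_top (by simpa using hn) hu
    rw [finrank_euclideanSpace_fin] at this
    exact this.ne
  have hint : ∀ {ρs' : Fin (n - 1) → EuclideanSpace ℝ (Fin n) → ℝ},
      (∀ k, ContinuousOn (ρs' k) (unitSphere n)) →
      IntegrableOn (fun w => ∏ k, ρs' k w) (sphereSlice u) μH[(n : ℝ) - 2] := fun h =>
    (continuousOn_finsetProd _ fun k _ => h k).integrableOn_of_subset_isCompact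
      (isCompact_sphere 0 1) (isClosed_sphereSlice u).measurableSet
      (sphereSlice_subset_sphere u) hslice
  rw [mixedIntRadial_apply, mixedIntRadial_apply, mixedIntRadial_apply, ← mul_add,
    ← integral_add (hint hσs) (hint hτs)]
  congr 1
  refine setIntegral_congr_fun (isClosed_sphereSlice u).measurableSet fun w hw => ?_
  exact (Finset.prod_add_prod_eq (Finset.mem_univ j) (hj w (sphereSlice_subset_sphere u hw)).symm
    (fun k _ hk => by rw [hσj k hk]) (fun k _ hk => by rw [hτj k hk])).symm

end MixedIntersectionBody

/-- **Inequality (2.3.2).** If `K, L, L₁, …, L_{n-2}` are star bodies in `ℝⁿ`,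
`0 ≤ i ≤ n-1` and `0 ≤ α ≤ 1`, then, writing `I(Q, M)` for the mixed
intersection body `I(Q, L₁,…,L_{n-2})` and `+̃` for radial addition,
`W̃_i(I(K +̃ L, M))^{1/(n-i)} ≤ W̃_i(I(αK +̃ (1-α)L, M))^{1/(n-i)}
  + W̃_i(I((1-α)K +̃ αL, M))^{1/(n-i)}`. -/
theorem brunn_minkowski_step (n : ℕ) (hn : 3 ≤ n)
    (ρK ρL : EuclideanSpace ℝ (Fin n) → ℝ)
    (hK : IsStarBody n ρK) (hL : IsStarBody n ρL)
    (Ls : Fin (n - 2) → EuclideanSpace ℝ (Fin n) → ℝ)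
    (hLs : ∀ m, IsStarBody n (Ls m))
    (i : ℕ) (hi : i ≤ n - 1) (α : ℝ) (hα0 : 0 ≤ α) (hα1 : α ≤ 1) :
    dualQuer n i (mixedIntRadial n
        (fun k => if h : (k : ℕ) < n - 2 then Ls ⟨(k : ℕ), h⟩
          else fun u => ρK u + ρL u)) ^ ((1 : ℝ) / ((n : ℝ) - i)) ≤
      dualQuer n i (mixedIntRadial n
        (fun k => if h : (k : ℕ) < n - 2 then Ls ⟨(k : ℕ), h⟩
          else fun u => α * ρK u + (1 - α) * ρL u)) ^ ((1 : ℝ) / ((n : ℝ) - i)) +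
      dualQuer n i (mixedIntRadial n
        (fun k => if h : (k : ℕ) < n - 2 then Ls ⟨(k : ℕ), h⟩
          else fun u => (1 - α) * ρK u + α * ρL u)) ^ ((1 : ℝ) / ((n : ℝ) - i)) := by
  have hlast : ∀ k : Fin (n - 1), k ≠ ⟨n - 2, by omega⟩ → (k : ℕ) < n - 2 := fun k hk => by
    have : (k : ℕ) ≠ n - 2 := fun h => hk (Fin.ext h)
    omega
  have hcont : ∀ f, ContinuousOn f (unitSphere n) → ∀ k : Fin (n - 1),
      ContinuousOn (if h : (k : ℕ) < n - 2 then Ls ⟨k, h⟩ else f) (unitSphere n) :=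
    fun f hf k => by split_ifs; exacts [(hLs _).1, hf]
  have hnonneg : ∀ f, (∀ w ∈ unitSphere n, 0 ≤ f w) → ∀ k : Fin (n - 1), ∀ w ∈ unitSphere n,
      0 ≤ (if h : (k : ℕ) < n - 2 then Ls ⟨k, h⟩ else f) w :=
    fun f hf k w hw => by split_ifs; exacts [((hLs _).2 w hw).le, hf w hw]
  have hA : ContinuousOn (fun u => α * ρK u + (1 - α) * ρL u) (unitSphere n) :=
    (continuousOn_const.mul hK.1).add (continuousOn_const.mul hL.1)
  have hB : ContinuousOn (fun u => (1 - α) * ρK u + α * ρL u) (unitSphere n) :=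
    (continuousOn_const.mul hK.1).add (continuousOn_const.mul hL.1)
  have hA0 : ∀ w ∈ unitSphere n, 0 ≤ α * ρK w + (1 - α) * ρL w := fun w hw =>
    add_nonneg (mul_nonneg hα0 (hK.2 w hw).le) (mul_nonneg (by linarith) (hL.2 w hw).le)
  have hB0 : ∀ w ∈ unitSphere n, 0 ≤ (1 - α) * ρK w + α * ρL w := fun w hw =>
    add_nonneg (mul_nonneg (by linarith) (hK.2 w hw).le) (mul_nonneg hα0 (hL.2 w hw).le)
  refine dualQuer_rpow_le_add (by omega) (continuousOn_mixedIntRadial (by omega) (hcont _ hA))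
    (continuousOn_mixedIntRadial (by omega) (hcont _ hB))
    (fun u _ => mixedIntRadial_nonneg (by omega) (hnonneg _ hA0) u)
    (fun u _ => mixedIntRadial_nonneg (by omega) (hnonneg _ hB0) u) fun u hu => ?_
  refine mixedIntRadial_add (by omega) ⟨n - 2, by omega⟩ (hcont _ hA) (hcont _ hB) (fun w _ => ?_)
    (fun k hk => by rw [dif_pos (hlast k hk), dif_pos (hlast k hk)])
    (fun k hk => by rw [dif_pos (hlast k hk), dif_pos (hlast k hk)])
    (ne_zero_of_mem_unit_sphere ⟨u, hu⟩)
  simp only [lt_irrefl, dite_false]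
  ring
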